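/- arXiv:2008.09668 — 5 statements merged into one kernel-verified Lean document; each statement's English description precedes it below -/
import Mathlib

section
/- Let Ω ⊂ ℝ² be a bounded measurable set, let θ : ℝ² → ℝ² be a compactly supported C¹ vector field, and let φ : ℝ² × ℝ → ℝ be a C¹ function with compact support. Then the function t ↦ ∫_{T_t(Ω)} φ(x,t) dx (the integral of φ(·,t) over the deformed set T_t(Ω) = {x + tθ(x) : x ∈ Ω}) is differentiable at t = 0 with derivative ∫_Ω ( φ̇(x) + (div θ)(x) · φ(x,0) ) dx. -/
/-!
For small `t` the map `T_t = id + t θ` is injective on `Ω`, because `θ` is Lipschitz on the compact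
set `closure Ω`, and its Jacobian `det (I + t Dθ) = 1 + t div θ + t² det Dθ` is positive there.
The change of variables formula therefore moves the integral to the fixed domain `Ω`, with
integrand `det (I + t Dθ x) φ (T_t x, t)`. Its `t`-derivative is jointly continuous, hence bounded
on `[-1, 1] × closure Ω`, so one may differentiate under the integral sign; at `t = 0`
the Jacobian is `1` and its derivative is `div θ`.
-/

open MeasureTheory Filter Topology Set Function

theorem LinearMap.det_one_add_smul_of_finrank_eq_two {K V : Type*} [Field K] [AddCommGroup V]
    [Module K V] (hV : Module.finrank K V = 2) (t : K) (f : V →ₗ[K] V) :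
    LinearMap.det (1 + t • f) = 1 + t * LinearMap.trace K V f + t ^ 2 * LinearMap.det f := by
  have : Module.Finite K V := Module.finite_of_finrank_eq_succ hV
  let b := Module.finBasisOfFinrankEq K V hV
  rw [← LinearMap.det_toMatrix b, ← LinearMap.det_toMatrix b f,
    LinearMap.trace_eq_matrix_trace K b, map_add, map_smul, LinearMap.toMatrix_one]
  simp only [Matrix.det_fin_two, Matrix.trace_fin_two, Matrix.add_apply, Matrix.smul_apply,
    Matrix.one_apply_eq, Matrix.one_apply_ne (by decide : (0 : Fin 2) ≠ 1),
    Matrix.one_apply_ne (by decide : (1 : Fin 2) ≠ 0), smul_eq_mul]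
  ring

theorem ContinuousLinearMap.hasDerivAt_det_id_add_smul_of_finrank_eq_two {𝕜 E : Type*}
    [NontriviallyNormedField 𝕜] [NormedAddCommGroup E] [NormedSpace 𝕜 E]
    (hE : Module.finrank 𝕜 E = 2) (f : E →L[𝕜] E) (t : 𝕜) :
    HasDerivAt (fun s : 𝕜 => (ContinuousLinearMap.id 𝕜 E + s • f).det)
      (LinearMap.trace 𝕜 E f + 2 * t * f.det) t := by
  have hpoly : (fun s : 𝕜 => (ContinuousLinearMap.id 𝕜 E + s • f).det) =
      fun s => 1 + s * LinearMap.trace 𝕜 E f + s ^ 2 * f.det :=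
    funext fun s => LinearMap.det_one_add_smul_of_finrank_eq_two hE s f
  rw [hpoly]
  refine ((((hasDerivAt_id t).mul_const _).const_add 1).fun_add
    ((hasDerivAt_pow 2 t).mul_const f.det)).congr_deriv ?_
  simp

section
variable {𝕜 E X : Type*} [NontriviallyNormedField 𝕜] [NormedAddCommGroup E] [NormedSpace 𝕜 E]
  [TopologicalSpace X] {f : X → E →L[𝕜] E}

@[fun_prop]
theorem Continuous.clm_det [CompleteSpace 𝕜] [FiniteDimensional 𝕜 E] (hf : Continuous f) :
    Continuous fun x => (f x).det :=
  ContinuousLinearMap.continuous_det.comp hf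

@[fun_prop]
theorem Continuous.clm_trace [CompleteSpace 𝕜] [FiniteDimensional 𝕜 E] (hf : Continuous f) :
    Continuous fun x => LinearMap.trace 𝕜 E (f x) :=
  (LinearMap.continuous_of_finiteDimensional
    ((LinearMap.trace 𝕜 E).comp (ContinuousLinearMap.coeLM 𝕜))).comp hf

end

section
variable {E : Type*} [NormedAddCommGroup E] [NormedSpace ℝ E]

theorem LipschitzOnWith.injOn_add_smul
    {θ : E → E} {s : Set E} {L : NNReal} (hθ : LipschitzOnWith L θ s) {t : ℝ}
    (ht : |t| * L < 1) : InjOn (fun y => y + t • θ y) s := by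
  intro x hx y hy hxy
  have hsub : x - y = t • (θ y - θ x) := by
    rw [smul_sub]; linear_combination (norm := module) hxy
  have hle : ‖x - y‖ ≤ |t| * L * ‖x - y‖ := by
    calc ‖x - y‖ = |t| * ‖θ y - θ x‖ := by rw [hsub, norm_smul, Real.norm_eq_abs]
      _ ≤ |t| * (L * ‖y - x‖) := by gcongr; exact hθ.norm_sub_le hy hx
      _ = |t| * L * ‖x - y‖ := by rw [norm_sub_rev, mul_assoc]
  have : ‖x - y‖ = 0 := by nlinarith [norm_nonneg (x - y)]
  exact sub_eq_zero.mp (norm_eq_zero.mp this)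

theorem ContDiff.eventually_injOn_add_smul {θ : E → E} (hθ : ContDiff ℝ 1 θ) {s : Set E}
    (hs : IsCompact s) : ∀ᶠ t in 𝓝 (0 : ℝ), InjOn (fun y => y + t • θ y) s := by
  obtain ⟨L, hL⟩ := hθ.locallyLipschitz.locallyLipschitzOn.exists_lipschitzOnWith_of_compact hs
  have hlim : Tendsto (fun t : ℝ => |t| * L) (𝓝 0) (𝓝 0) :=
    (by fun_prop : Continuous fun t : ℝ => |t| * L).tendsto' 0 0 (by simp)
  filter_upwards [hlim.eventually (gt_mem_nhds one_pos)] with t ht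
  exact hL.injOn_add_smul ht

theorem IsCompact.eventually_forall_det_id_add_smul_pos [FiniteDimensional ℝ E] {X : Type*}
    [TopologicalSpace X] {K : Set X} (hK : IsCompact K) {A : X → E →L[ℝ] E} (hA : Continuous A) :
    ∀ᶠ t in 𝓝 (0 : ℝ), ∀ x ∈ K, 0 < (ContinuousLinearMap.id ℝ E + t • A x).det := by
  refine hK.eventually_forall_of_forall_eventually fun x _ => ?_
  have hcont : Continuous fun p : ℝ × X => (ContinuousLinearMap.id ℝ E + p.1 • A p.2).det :=
    ContinuousLinearMap.continuous_det.comp (by fun_prop)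
  refine hcont.continuousAt.eventually (lt_mem_nhds ?_)
  simp [ContinuousLinearMap.det, LinearMap.det_id]

theorem setIntegral_image_add_smul {F : Type*} [NormedAddCommGroup F] [NormedSpace ℝ F]
    [FiniteDimensional ℝ E] [MeasurableSpace E] [BorelSpace E]
    (μ : Measure E) [μ.IsAddHaarMeasure] {θ : E → E} (hθ : Differentiable ℝ θ) {s : Set E}
    (hs : MeasurableSet s) {t : ℝ} (hinj : InjOn (fun y => y + t • θ y) s)
    (hdet : ∀ x ∈ s, 0 ≤ (ContinuousLinearMap.id ℝ E + t • fderiv ℝ θ x).det) (g : E → F) :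
    ∫ x in (fun y => y + t • θ y) '' s, g x ∂μ =
      ∫ x in s, (ContinuousLinearMap.id ℝ E + t • fderiv ℝ θ x).det • g (x + t • θ x) ∂μ := by
  have hderiv : ∀ x ∈ s, HasFDerivWithinAt (fun y => y + t • θ y)
      (ContinuousLinearMap.id ℝ E + t • fderiv ℝ θ x) s x := fun x _ =>
    ((hasFDerivAt_id x).add ((hθ x).hasFDerivAt.const_smul t)).hasFDerivWithinAt
  rw [integral_image_eq_integral_abs_det_fderiv_smul μ hs hderiv hinj]
  exact setIntegral_congr_fun hs fun x hx => by rw [abs_of_nonneg (hdet x hx)]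

theorem Differentiable.hasDerivAt_comp_add_smul_prodMk {F : Type*} [NormedAddCommGroup F]
    [NormedSpace ℝ F] {φ : E × ℝ → F} (hφ : Differentiable ℝ φ) (x v : E) (t : ℝ) :
    HasDerivAt (fun s : ℝ => φ (x + s • v, s)) (fderiv ℝ φ (x + t • v, t) (v, 1)) t := by
  have hpath : HasDerivAt (fun s : ℝ => (x + s • v, s)) (v, (1 : ℝ)) t :=
    (((hasDerivAt_id t).smul_const v).const_add x).prodMk (hasDerivAt_id t) |>.congr_deriv
      (by simp)
  exact (hφ _).hasFDerivAt.comp_hasDerivAt t hpath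

end

theorem hasDerivAt_setIntegral_of_continuous_uncurry_deriv {X G : Type*} [TopologicalSpace X]
    [T2Space X] [SecondCountableTopology X] [MeasurableSpace X] [OpensMeasurableSpace X]
    [NormedAddCommGroup G] [NormedSpace ℝ G]
    {μ : Measure X} [IsFiniteMeasureOnCompacts μ] {K s : Set X} (hK : IsCompact K)
    (hsK : s ⊆ K) (hs : MeasurableSet s) {F F' : ℝ → X → G} {t₀ : ℝ}
    (hF : ∀ t, Continuous (F t)) (hF' : Continuous (uncurry F'))
    (hderiv : ∀ t, ∀ x ∈ s, HasDerivAt (F · x) (F' t x) t) :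
    HasDerivAt (fun t => ∫ x in s, F t x ∂μ) (∫ x in s, F' t₀ x ∂μ) t₀ := by
  obtain ⟨C, hC⟩ := ((isCompact_closedBall t₀ 1).prod hK).exists_bound_of_continuousOn
    hF'.continuousOn
  have : IsFiniteMeasure (μ.restrict s) :=
    isFiniteMeasure_restrict.mpr (measure_mono hsK |>.trans_lt hK.measure_lt_top).ne
  refine (hasDerivAt_integral_of_dominated_loc_of_deriv_le (bound := fun _ => C)
    (Metric.ball_mem_nhds t₀ one_pos) (Eventually.of_forall fun t => (hF t).aestronglyMeasurable)
    (((hF t₀).continuousOn.integrableOn_compact hK).mono_set hsK)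
    (hF'.comp (Continuous.prodMk_right t₀)).aestronglyMeasurable ?_ (integrable_const C)
    ((ae_restrict_iff' hs).mpr (Eventually.of_forall fun x hx t _ => hderiv t x hx))).2
  refine (ae_restrict_iff' hs).mpr (Eventually.of_forall fun x hx t ht => ?_)
  exact hC (t, x) ⟨Metric.ball_subset_closedBall ht, hsK hx⟩

theorem shape_derivative_domain_integral_general
    (Ω : Set (EuclideanSpace ℝ (Fin 2)))
    (hΩm : MeasurableSet Ω) (hΩb : Bornology.IsBounded Ω)
    (θ : EuclideanSpace ℝ (Fin 2) → EuclideanSpace ℝ (Fin 2))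
    (hθ : ContDiff ℝ 1 θ)
    (φ : EuclideanSpace ℝ (Fin 2) × ℝ → ℝ)
    (hφ : ContDiff ℝ 1 φ) :
    HasDerivAt
      (fun t : ℝ => ∫ x in (fun y => y + t • θ y) '' Ω, φ (x, t))
      (∫ x in Ω,
        ((fderiv ℝ φ (x, (0 : ℝ))) (θ x, (1 : ℝ)) +
          (LinearMap.trace ℝ (EuclideanSpace ℝ (Fin 2)) (fderiv ℝ θ x).toLinearMap) * φ (x, 0)))
      0 := by
  have hK : IsCompact (closure Ω) := hΩb.isCompact_closure
  have hA : Continuous (fderiv ℝ θ) := hθ.continuous_fderiv one_ne_zero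
  have hDφ : Continuous (fderiv ℝ φ) := hφ.continuous_fderiv one_ne_zero
  have hchange : (fun t : ℝ => ∫ x in (fun y => y + t • θ y) '' Ω, φ (x, t)) =ᶠ[𝓝 0]
      fun t => ∫ x in Ω,
        (ContinuousLinearMap.id ℝ _ + t • fderiv ℝ θ x).det * φ (x + t • θ x, t) := by
    filter_upwards [(hθ.eventually_injOn_add_smul hK).mono fun t h => h.mono subset_closure,
      hK.eventually_forall_det_id_add_smul_pos hA] with t hinj hdet
    exact setIntegral_image_add_smul volume (hθ.differentiable one_ne_zero) hΩm hinj
      (fun x hx => (hdet x (subset_closure hx)).le) _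
  have hderiv := hasDerivAt_setIntegral_of_continuous_uncurry_deriv (μ := volume) (t₀ := 0)
    hK subset_closure hΩm
    (F := fun t x => (ContinuousLinearMap.id ℝ _ + t • fderiv ℝ θ x).det * φ (x + t • θ x, t))
    (F' := fun t x =>
      (LinearMap.trace ℝ (EuclideanSpace ℝ (Fin 2)) (fderiv ℝ θ x) + 2 * t * (fderiv ℝ θ x).det) *
        φ (x + t • θ x, t) +
      (ContinuousLinearMap.id ℝ _ + t • fderiv ℝ θ x).det * fderiv ℝ φ (x + t • θ x, t) (θ x, 1))
    (fun t => by fun_prop) (by fun_prop)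
    (fun t x _ => (ContinuousLinearMap.hasDerivAt_det_id_add_smul_of_finrank_eq_two
      finrank_euclideanSpace_fin _ t).mul
      ((hφ.differentiable one_ne_zero).hasDerivAt_comp_add_smul_prodMk x (θ x) t))
  refine (hderiv.congr_of_eventuallyEq hchange).congr_deriv
    (integral_congr_ae (Eventually.of_forall fun x => ?_))
  simp [add_comm, ContinuousLinearMap.det, LinearMap.det_id]

/-- Hadamard shape derivative, domain part (Lemma 4.1 of the paper): for the deformation
`T_t(x) = x + tθ(x)`, the map `t ↦ ∫_{T_t(Ω)} φ(x, t) dx` is differentiable at `t = 0` with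
derivative `∫_Ω (φ̇ + (div θ) φ(·, 0))`, where `φ̇(x)` is the material derivative
`fderiv ℝ φ (x,0) (θ x, 1)` and `div θ = trace (Dθ)`. -/
theorem shape_derivative_domain_integral
    (Ω : Set (EuclideanSpace ℝ (Fin 2)))
    (hΩm : MeasurableSet Ω) (hΩb : Bornology.IsBounded Ω)
    (θ : EuclideanSpace ℝ (Fin 2) → EuclideanSpace ℝ (Fin 2))
    (hθ : ContDiff ℝ 1 θ) (hθc : HasCompactSupport θ)
    (φ : EuclideanSpace ℝ (Fin 2) × ℝ → ℝ)
    (hφ : ContDiff ℝ 1 φ) (hφc : HasCompactSupport φ) :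
    HasDerivAt
      (fun t : ℝ => ∫ x in (fun y => y + t • θ y) '' Ω, φ (x, t))
      (∫ x in Ω,
        ((fderiv ℝ φ (x, (0 : ℝ))) (θ x, (1 : ℝ)) +
          (LinearMap.trace ℝ (EuclideanSpace ℝ (Fin 2)) (fderiv ℝ θ x).toLinearMap) * φ (x, 0)))
      0 :=
  shape_derivative_domain_integral_general Ω hΩm hΩb θ hθ φ hφ
end

section
/- Let γ : [0,1] → ℝ² be a C¹ regular curve (γ'(s) ≠ 0 for all s), let θ : ℝ² → ℝ² be a C¹ vector field, and let ψ : ℝ² × ℝ → ℝ be C¹. For each s let n(s) denote the unit normal obtained by rotating the unit tangent γ'(s)/‖γ'(s)‖ by π/2. Then the function t ↦ ∫₀¹ ψ(γ(s) + tθ(γ(s)), t) · ‖γ'(s) + t·Dθ(γ(s))γ'(s)‖ ds (the integral of ψ(·,t) over the deformed curve T_t∘γ with respect to arclength) is differentiable at t = 0 with derivative ∫₀¹ [ ψ̇(γ(s)) + ( div θ(γ(s)) − ⟨Dθ(γ(s)) n(s), n(s)⟩ ) · ψ(γ(s),0) ] ‖γ'(s)‖ ds. -/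
/-!
Differentiate under the integral sign: the integrand is `C¹` in `t`, with a derivative jointly
continuous near `{0} × [0, 1]` because `γ' + t Dθ γ'` stays away from `0` for small `t`.
The derivative of the length element at `t = 0` is `⟪Dθ γ', γ'⟫ / ‖γ'‖ = ⟪Dθ τ, τ⟫ ‖γ'‖` for the
unit tangent `τ`, and since `(τ, n)` is an orthonormal basis of `ℝ²`,
`⟪Dθ τ, τ⟫ = tr Dθ - ⟪Dθ n, n⟫`.
-/

open MeasureTheory

/-- Rotation by `π/2` in `ℝ²`, sending `(a, b)` to `(-b, a)`. -/
noncomputable def rotHalfPi (v : EuclideanSpace ℝ (Fin 2)) : EuclideanSpace ℝ (Fin 2) :=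
  (EuclideanSpace.equiv (Fin 2) ℝ).symm ![-(v 1), v 0]

open Filter Topology Set Function
open scoped InnerProductSpace

theorem HasDerivAt.norm {F : Type*} [NormedAddCommGroup F] [InnerProductSpace ℝ F]
    {f : ℝ → F} {f' : F} {x : ℝ} (hf : HasDerivAt f f' x) (h0 : f x ≠ 0) :
    HasDerivAt (fun x => ‖f x‖) (⟪f', f x⟫_ℝ / ‖f x‖) x := by
  have hpos : 0 < ‖f x‖ := norm_pos_iff.mpr h0
  have := (hf.norm_sq).sqrt (by positivity)
  simp only [Real.sqrt_sq (norm_nonneg _)] at this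
  convert this using 1
  rw [real_inner_comm]
  field_simp

theorem IsCompact.eventually_forall_add_smul_ne_zero {X F : Type*} [TopologicalSpace X]
    [NormedAddCommGroup F] [NormedSpace ℝ F] {K : Set X} (hK : IsCompact K) {v w : X → F}
    (hv : Continuous v) (hw : Continuous w) (h0 : ∀ s ∈ K, v s ≠ 0) :
    ∀ᶠ t : ℝ in 𝓝 0, ∀ s ∈ K, v s + t • w s ≠ 0 := by
  refine hK.eventually_forall_of_forall_eventually fun s hs => ?_
  have hcont : Continuous fun z : ℝ × X => v z.2 + z.1 • w z.2 := by fun_prop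
  exact hcont.continuousAt.eventually_ne (by simpa using h0 s hs)

theorem hasDerivAt_add_smul {F : Type*} [NormedAddCommGroup F] [NormedSpace ℝ F] (x v : F)
    (t : ℝ) : HasDerivAt (fun t : ℝ => x + t • v) v t := by
  simpa using ((hasDerivAt_id t).smul_const v).const_add x

theorem hasDerivAt_mul_norm_add_smul {E F : Type*} [NormedAddCommGroup E] [NormedSpace ℝ E]
    [NormedAddCommGroup F] [InnerProductSpace ℝ F] {ψ : E × ℝ → ℝ} {p q : E} {v w : F} {t : ℝ}
    (hψ : DifferentiableAt ℝ ψ (p + t • q, t)) (hne : v + t • w ≠ 0) :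
    HasDerivAt (fun t => ψ (p + t • q, t) * ‖v + t • w‖)
      (fderiv ℝ ψ (p + t • q, t) (q, 1) * ‖v + t • w‖ +
        ψ (p + t • q, t) * (⟪w, v + t • w⟫_ℝ / ‖v + t • w‖)) t :=
  (hψ.hasFDerivAt.comp_hasDerivAt (f := fun t : ℝ => (p + t • q, t)) t
    ((hasDerivAt_add_smul p q t).prodMk (hasDerivAt_id t))).mul
      ((hasDerivAt_add_smul v w t).norm hne)

namespace intervalIntegral

variable {𝕜 E : Type*} [RCLike 𝕜] [NormedAddCommGroup E] [NormedSpace ℝ E] [NormedSpace 𝕜 E]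
  {μ : Measure ℝ} [IsLocallyFiniteMeasure μ]

theorem hasDerivAt_integral_of_continuousAt_uncurry {F F' : 𝕜 → ℝ → E} {x₀ : 𝕜} {a b : ℝ}
    (hF : ∀ᶠ x in 𝓝 x₀, ContinuousOn (F x) (uIcc a b))
    (hF' : ∀ t ∈ uIcc a b, ContinuousAt (uncurry F') (x₀, t))
    (h_diff : ∀ᶠ x in 𝓝 x₀, ∀ t ∈ uIcc a b, HasDerivAt (F · t) (F' x t) x) :
    HasDerivAt (fun x => ∫ t in a..b, F x t ∂μ) (∫ t in a..b, F' x₀ t ∂μ) x₀ := by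
  have hF'₀ : ContinuousOn (F' x₀) (uIcc a b) := fun t ht =>
    ((hF' t ht).comp (Continuous.prodMk_right x₀).continuousAt).continuousWithinAt
  obtain ⟨C, hC⟩ := isCompact_uIcc.exists_bound_of_continuousOn hF'₀
  -- tube lemma: continuity along `{x₀} × [a, b]` bounds `F'` uniformly near `x₀`
  have h_bound : ∀ᶠ x in 𝓝 x₀, ∀ t ∈ uIcc a b, ‖F' x t‖ ≤ C + 1 :=
    isCompact_uIcc.eventually_forall_of_forall_eventually fun t ht =>
      (hF' t ht).norm.eventually_le_const ((hC t ht).trans_lt (lt_add_one C))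
  refine (hasDerivAt_integral_of_dominated_loc_of_deriv_le (bound := fun _ => C + 1)
    (h_bound.and h_diff) (hF.mono fun x hx => ?_) hF.self_of_nhds.intervalIntegrable
    ((hF'₀.mono uIoc_subset_uIcc).aestronglyMeasurable measurableSet_uIoc)
    (ae_of_all _ fun t ht x hx => hx.1 t (uIoc_subset_uIcc ht)) intervalIntegrable_const
    (ae_of_all _ fun t ht x hx => hx.2 t (uIoc_subset_uIcc ht))).2
  exact (hx.mono uIoc_subset_uIcc).aestronglyMeasurable measurableSet_uIoc

end intervalIntegral

local notation "ℝ²" => EuclideanSpace ℝ (Fin 2)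

theorem inner_rotHalfPi_self (v : ℝ²) : ⟪rotHalfPi v, v⟫_ℝ = 0 := by
  simp only [rotHalfPi, PiLp.continuousLinearEquiv_symm_apply, PiLp.inner_apply,
    RCLike.inner_apply, Real.ringHom_apply, Fin.sum_univ_two, Matrix.cons_val_zero,
    Matrix.cons_val_one, Matrix.cons_val_fin_one]
  ring

theorem norm_rotHalfPi (v : ℝ²) : ‖rotHalfPi v‖ = ‖v‖ := by
  simp [rotHalfPi, EuclideanSpace.norm_eq, Fin.sum_univ_two, add_comm]

theorem orthonormal_rotHalfPi {u : ℝ²} (hu : ‖u‖ = 1) : Orthonormal ℝ ![u, rotHalfPi u] := by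
  rw [orthonormal_iff_ite]
  intro i j
  fin_cases i <;> fin_cases j <;>
    simp [norm_rotHalfPi, hu, inner_rotHalfPi_self, real_inner_comm (rotHalfPi u) u]

theorem LinearMap.trace_eq_inner_add_inner_rotHalfPi (A : ℝ² →ₗ[ℝ] ℝ²) {u : ℝ²} (hu : ‖u‖ = 1) :
    LinearMap.trace ℝ ℝ² A = ⟪u, A u⟫_ℝ + ⟪rotHalfPi u, A (rotHalfPi u)⟫_ℝ := by
  have hon := orthonormal_rotHalfPi hu
  let b := OrthonormalBasis.mk hon
    (hon.linearIndependent.span_eq_top_of_card_eq_finrank (by simp)).ge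
  simp [A.trace_eq_sum_inner b, b, Fin.sum_univ_two]

theorem trace_sub_inner_rotHalfPi_mul_norm (A : ℝ² →L[ℝ] ℝ²) {v : ℝ²} (hv : v ≠ 0) :
    (LinearMap.trace ℝ ℝ² A.toLinearMap -
        ⟪A (rotHalfPi (‖v‖⁻¹ • v)), rotHalfPi (‖v‖⁻¹ • v)⟫_ℝ) * ‖v‖ =
      ⟪A v, v⟫_ℝ / ‖v‖ := by
  have hv' : ‖v‖ ≠ 0 := norm_ne_zero_iff.mpr hv
  have hu : ‖‖v‖⁻¹ • v‖ = 1 := by rw [norm_smul, norm_inv, norm_norm, inv_mul_cancel₀ hv']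
  rw [A.toLinearMap.trace_eq_inner_add_inner_rotHalfPi hu,
    real_inner_comm _ (A (rotHalfPi _))]
  simp only [ContinuousLinearMap.coe_coe, map_smul, real_inner_smul_left, real_inner_smul_right]
  field_simp
  rw [real_inner_comm (A v) v]
  ring

/-- Hadamard shape derivative, boundary part (Lemma 4.1 of the paper), for a parametrized
`C¹` regular curve `γ` in `ℝ²`: the map
`t ↦ ∫₀¹ ψ(γ(s) + tθ(γ(s)), t) ‖γ'(s) + t Dθ(γ(s)) γ'(s)‖ ds` is differentiable at `t = 0`
with derivative `∫₀¹ (ψ̇ + (div θ − ⟨Dθ n, n⟩) ψ(·,0)) ‖γ'‖ ds`, where `n` is the unit normal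
obtained by rotating the unit tangent by `π/2`. -/
theorem shape_derivative_boundary_integral
    (γ : ℝ → EuclideanSpace ℝ (Fin 2)) (hγ : ContDiff ℝ 1 γ)
    (hreg : ∀ s ∈ Set.Icc (0 : ℝ) 1, deriv γ s ≠ 0)
    (θ : EuclideanSpace ℝ (Fin 2) → EuclideanSpace ℝ (Fin 2)) (hθ : ContDiff ℝ 1 θ)
    (ψ : EuclideanSpace ℝ (Fin 2) × ℝ → ℝ) (hψ : ContDiff ℝ 1 ψ) :
    HasDerivAt
      (fun t : ℝ => ∫ s in (0 : ℝ)..1,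
        ψ (γ s + t • θ (γ s), t) * ‖deriv γ s + t • (fderiv ℝ θ (γ s)) (deriv γ s)‖)
      (∫ s in (0 : ℝ)..1,
        ((fderiv ℝ ψ (γ s, (0 : ℝ))) (θ (γ s), (1 : ℝ)) +
          (LinearMap.trace ℝ (EuclideanSpace ℝ (Fin 2)) (fderiv ℝ θ (γ s)).toLinearMap -
            (inner ℝ ((fderiv ℝ θ (γ s)) (rotHalfPi (‖deriv γ s‖⁻¹ • deriv γ s)))
              (rotHalfPi (‖deriv γ s‖⁻¹ • deriv γ s)) : ℝ)) * ψ (γ s, 0)) * ‖deriv γ s‖)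
      0 := by
  set v := deriv γ
  set w := fun s => fderiv ℝ θ (γ s) (v s)
  have hγc : Continuous γ := hγ.continuous
  have hθc : Continuous θ := hθ.continuous
  have hψc : Continuous ψ := hψ.continuous
  have hdψ : Continuous (fderiv ℝ ψ) := hψ.continuous_fderiv one_ne_zero
  have hv : Continuous v := hγ.continuous_deriv le_rfl
  have hw : Continuous w := ((hθ.continuous_fderiv one_ne_zero).comp hγc).clm_apply hv
  have hreg' : ∀ s ∈ uIcc (0 : ℝ) 1, v s ≠ 0 := by rwa [uIcc_of_le zero_le_one]
  let F' : ℝ → ℝ → ℝ := fun t s =>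
    fderiv ℝ ψ (γ s + t • θ (γ s), t) (θ (γ s), 1) * ‖v s + t • w s‖ +
      ψ (γ s + t • θ (γ s), t) * (⟪w s, v s + t • w s⟫_ℝ / ‖v s + t • w s‖)
  have h_diff : ∀ᶠ t in 𝓝 (0 : ℝ), ∀ s ∈ uIcc (0 : ℝ) 1,
      HasDerivAt (fun t => ψ (γ s + t • θ (γ s), t) * ‖v s + t • w s‖) (F' t s) t := by
    filter_upwards [isCompact_uIcc.eventually_forall_add_smul_ne_zero hv hw hreg'] with t ht s hs
    exact hasDerivAt_mul_norm_add_smul (hψ.differentiable one_ne_zero _) (ht s hs)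
  have hF'_cont : ∀ s ∈ uIcc (0 : ℝ) 1, ContinuousAt (uncurry F') (0, s) := by
    intro s hs
    have hne : ‖v s + (0 : ℝ) • w s‖ ≠ 0 := by simpa using hreg' s hs
    simp only [F', uncurry_def]
    fun_prop (disch := exact hne)
  refine (intervalIntegral.hasDerivAt_integral_of_continuousAt_uncurry
    (Eventually.of_forall fun t => by fun_prop) hF'_cont h_diff).congr_deriv ?_
  refine intervalIntegral.integral_congr fun s hs => ?_
  have htangential := trace_sub_inner_rotHalfPi_mul_norm (fderiv ℝ θ (γ s)) (hreg' s hs)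
  simp only [F', zero_smul, add_zero]
  linear_combination -ψ (γ s, 0) * htangential
end

section
/- Let Ω ⊂ ℝ² be a bounded measurable set, let θ : ℝ² → ℝ² be a compactly supported C¹ vector field, and let w, v : ℝ² × ℝ → ℝ be C² functions with compact support. Then the function t ↦ ∫_{T_t(Ω)} ∇_x w(x,t) · ∇_x v(x,t) dx is differentiable at t = 0 with derivative ∫_Ω [ (div θ)(x) ∇w(x,0)·∇v(x,0) − ∇w(x,0) · S(θ)(x) ∇v(x,0) + ∇ẇ(x)·∇v(x,0) + ∇v̇(x)·∇w(x,0) ] dx, where ẇ, v̇ are the material derivatives and ∇ẇ, ∇v̇ are their spatial gradients. -/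
/-!
Pull the integral back to `Ω` along `T_t(y) = y + tθ(y)`: for small `t` this map is injective on
`Ω` (a Lipschitz perturbation of the identity) and has Jacobian `det (1 + t Dθ) > 0`, so the
integrand becomes `det (1 + t Dθ(y)) g(T_t y, t)` with `g = ∇w · ∇v`. Differentiating under the
integral sign at `t = 0`, using `d/dt det (1 + tA) = tr A` at `t = 0`, gives Reynolds' formula
`∫_Ω ġ + (div θ) g`. Finally `ġ` is expanded by the product rule and the commutation rule
`(∇f)˙ = ∇ḟ - (Dθ)ᵀ ∇f`, which comes from the symmetry of second derivatives.
-/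

open MeasureTheory Filter Topology Metric Set InnerProductSpace RealInnerProductSpace
open scoped NNReal

namespace ContinuousLinearMap

variable {𝕜 E : Type*} [NontriviallyNormedField 𝕜] [NormedAddCommGroup E]
  [NormedSpace 𝕜 E] [FiniteDimensional 𝕜 E]

theorem contDiff_det [CompleteSpace 𝕜] {n : WithTop ℕ∞} :
    ContDiff 𝕜 n fun A : E →L[𝕜] E => A.det := by
  classical
  let b := Module.finBasis 𝕜 E
  have entry : ∀ i j, ContDiff 𝕜 n fun A : E →L[𝕜] E => LinearMap.toMatrix b b A i j :=
    fun i j => by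
      simp only [LinearMap.toMatrix_apply]
      exact ((b.coord i).toContinuousLinearMap.comp (apply 𝕜 E (b j))).contDiff
  simp only [det, ← LinearMap.det_toMatrix b, Matrix.det_apply]
  exact ContDiff.sum fun σ _ => (contDiff_prod fun i _ => entry _ _).const_smul _

theorem hasDerivAt_det_one_add_smul (A : E →L[𝕜] E) :
    HasDerivAt (fun t : 𝕜 => (1 + t • A).det) (LinearMap.trace 𝕜 E A) 0 := by
  classical
  let b := Module.finBasis 𝕜 E
  set M := LinearMap.toMatrix b b A
  set Q := Matrix.det (1 + (Polynomial.X : Polynomial 𝕜) • M.map Polynomial.C)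
  have hQ : ∀ t : 𝕜, Q.eval t = (1 + t • A).det := fun t => by
    rw [det, ← LinearMap.det_toMatrix b, ← Polynomial.coe_evalRingHom, RingHom.map_det]
    congr 1
    ext i j
    simp [M, Matrix.one_apply, LinearMap.toMatrix_one, apply_ite (Polynomial.eval t), mul_comm t]
  rw [LinearMap.trace_eq_matrix_trace 𝕜 b, ← Matrix.derivative_det_one_add_X_smul]
  simpa only [hQ] using Q.hasDerivAt 0

theorem fderiv_det_one_apply [CompleteSpace 𝕜] (A : E →L[𝕜] E) :
    fderiv 𝕜 (fun B : E →L[𝕜] E => B.det) 1 A = LinearMap.trace 𝕜 E A := by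
  have hline : HasDerivAt (fun t : 𝕜 => (1 : E →L[𝕜] E) + t • A) A 0 := by
    simpa using ((hasDerivAt_id (0:𝕜)).smul_const A).const_add 1
  have hdet : HasFDerivAt (fun B : E →L[𝕜] E => B.det)
      (fderiv 𝕜 (fun B : E →L[𝕜] E => B.det) 1) (1 + (0 : 𝕜) • A) := by
    rw [zero_smul, add_zero]
    exact (contDiff_det.differentiable one_ne_zero 1).hasFDerivAt
  have hcomp := hdet.comp_hasDerivAt (0 : 𝕜) hline
  exact hcomp.unique (hasDerivAt_det_one_add_smul A)

end ContinuousLinearMap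

theorem hasDerivAt_setIntegral_of_continuous_deriv {X F : Type*} [TopologicalSpace X] [T2Space X]
    [SecondCountableTopology X] [MeasurableSpace X] [OpensMeasurableSpace X]
    [NormedAddCommGroup F] [NormedSpace ℝ F] {μ : Measure X} [IsFiniteMeasureOnCompacts μ]
    {Ω : Set X} (hΩ : MeasurableSet Ω) (hΩc : IsCompact (closure Ω))
    {H H' : ℝ → X → F} (hH : ∀ t, Continuous (H t)) (hH' : Continuous (Function.uncurry H'))
    (hderiv : ∀ t y, HasDerivAt (H · y) (H' t y) t) (t₀ : ℝ) :
    HasDerivAt (fun t => ∫ y in Ω, H t y ∂μ) (∫ y in Ω, H' t₀ y ∂μ) t₀ := by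
  obtain ⟨C, hC⟩ := ((isCompact_closedBall t₀ 1).prod hΩc).exists_bound_of_continuousOn
    hH'.continuousOn
  have hΩμ : μ Ω ≠ ⊤ := (measure_mono subset_closure).trans_lt hΩc.measure_lt_top |>.ne
  refine (hasDerivAt_integral_of_dominated_loc_of_deriv_le (closedBall_mem_nhds t₀ one_pos)
    (.of_forall fun t => (hH t).aestronglyMeasurable)
    (((hH t₀).continuousOn.integrableOn_compact hΩc).mono_set subset_closure)
    (hH'.comp (Continuous.prodMk_right t₀)).aestronglyMeasurable ?_
    (integrableOn_const (C := C) hΩμ) (.of_forall fun y t _ => hderiv t y)).2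
  filter_upwards [ae_restrict_mem hΩ] with y hy t ht
  exact hC (t, y) ⟨ht, subset_closure hy⟩

theorem injOn_add_smul_of_lipschitzOnWith {E : Type*} [NormedAddCommGroup E] [NormedSpace ℝ E]
    {θ : E → E} {s : Set E} {K : ℝ≥0} (hθ : LipschitzOnWith K θ s) {t : ℝ} (ht : |t| * K < 1) :
    InjOn (fun y => y + t • θ y) s := by
  intro y hy z hz hyz
  have hdiff : y - z = t • (θ z - θ y) := by
    simp only at hyz
    linear_combination (norm := module) hyz
  have hle : ‖y - z‖ ≤ |t| * K * ‖y - z‖ := calc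
    ‖y - z‖ = |t| * ‖θ z - θ y‖ := by rw [hdiff, norm_smul, Real.norm_eq_abs]
    _ ≤ |t| * (K * ‖z - y‖) := by gcongr; exact hθ.norm_sub_le hz hy
    _ = |t| * K * ‖y - z‖ := by rw [norm_sub_rev]; ring
  have : ‖y - z‖ = 0 := by nlinarith [norm_nonneg (y - z)]
  exact sub_eq_zero.mp (norm_eq_zero.mp this)

section Transport

variable {E F : Type*} [NormedAddCommGroup E] [NormedSpace ℝ E] [NormedAddCommGroup F]
  [NormedSpace ℝ F]

noncomputable def materialDeriv (θ : E → E) (f : E × ℝ → F) (p : E × ℝ) : F :=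
  fderiv ℝ f p (θ p.1, 1)

variable [FiniteDimensional ℝ E] [MeasurableSpace E] [BorelSpace E] (μ : Measure E) {Ω : Set E}
  {θ : E → E}

theorem eventually_integral_image_add_smul_eq [μ.IsAddHaarMeasure] (hΩ : MeasurableSet Ω)
    (hΩb : Bornology.IsBounded Ω) (hθ : ContDiff ℝ 1 θ) :
    ∀ᶠ t in 𝓝 (0 : ℝ), ∀ f : E → F, ∫ x in (fun y => y + t • θ y) '' Ω, f x ∂μ =
      ∫ y in Ω, (1 + t • fderiv ℝ θ y).det • f (y + t • θ y) ∂μ := by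
  have hΩc := hΩb.isCompact_closure
  obtain ⟨K, hK⟩ := hθ.locallyLipschitz.locallyLipschitzOn.exists_lipschitzOnWith_of_compact hΩc
  have hsmall : ∀ᶠ t in 𝓝 (0 : ℝ), |t| * (K : ℝ) < 1 :=
    (continuous_abs.mul continuous_const).continuousAt.eventually_lt continuousAt_const
      (by simp)
  have hJ : Continuous fun q : ℝ × E => (1 + q.1 • fderiv ℝ θ q.2).det := by
    have := hθ.continuous_fderiv one_ne_zero
    exact ContinuousLinearMap.continuous_det.comp (by fun_prop)
  have hpos : ∀ᶠ t in 𝓝 (0 : ℝ), ∀ y ∈ closure Ω, 0 < (1 + t • fderiv ℝ θ y).det :=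
    hΩc.eventually_forall_of_forall_eventually fun y _ =>
      hJ.continuousAt.eventually (lt_mem_nhds (by simp [ContinuousLinearMap.det]))
  filter_upwards [hsmall, hpos] with t ht htpos f
  have hT : ∀ y, HasFDerivAt (fun y => y + t • θ y) (1 + t • fderiv ℝ θ y) y := fun y =>
    (hasFDerivAt_id y).add ((hθ.differentiable one_ne_zero y).hasFDerivAt.const_smul t)
  rw [integral_image_eq_integral_abs_det_fderiv_smul μ hΩ (fun y _ => (hT y).hasFDerivWithinAt)
    (injOn_add_smul_of_lipschitzOnWith (hK.mono subset_closure) ht)]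
  refine setIntegral_congr_fun hΩ fun y hy => ?_
  rw [abs_of_pos (htpos y (subset_closure hy))]

theorem hasDerivAt_integral_det_smul_comp_add_smul [IsFiniteMeasureOnCompacts μ]
    (hΩ : MeasurableSet Ω) (hΩb : Bornology.IsBounded Ω) (hθ : ContDiff ℝ 1 θ) {g : E × ℝ → F}
    (hg : ContDiff ℝ 1 g) :
    HasDerivAt (fun t : ℝ => ∫ y in Ω, (1 + t • fderiv ℝ θ y).det • g (y + t • θ y, t) ∂μ)
      (∫ y in Ω, materialDeriv θ g (y, 0) + LinearMap.trace ℝ E (fderiv ℝ θ y) • g (y, 0) ∂μ)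
      0 := by
  set J : ℝ → E → ℝ := fun t y => (1 + t • fderiv ℝ θ y).det
  set J' : ℝ → E → ℝ := fun t y =>
    fderiv ℝ (fun B : E →L[ℝ] E => B.det) (1 + t • fderiv ℝ θ y) (fderiv ℝ θ y)
  set G : ℝ → E → F := fun t y => g (y + t • θ y, t)
  set G' : ℝ → E → F := fun t y => fderiv ℝ g (y + t • θ y, t) (θ y, 1)
  have hdet := (ContinuousLinearMap.contDiff_det (𝕜 := ℝ) (E := E) (n := 1))
  have hderiv : ∀ t y, HasDerivAt (fun s => J s y • G s y) (J t y • G' t y + J' t y • G t y) t := by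
    intro t y
    have hline : HasDerivAt (fun s : ℝ => 1 + s • fderiv ℝ θ y) (fderiv ℝ θ y) t := by
      simpa using ((hasDerivAt_id t).smul_const (fderiv ℝ θ y)).const_add 1
    have hcurve : HasDerivAt (fun s : ℝ => (y + s • θ y, s)) (θ y, 1) t := by
      simpa using (((hasDerivAt_id t).smul_const (θ y)).const_add y).prodMk (hasDerivAt_id t)
    exact ((hdet.differentiable one_ne_zero _).hasFDerivAt.comp_hasDerivAt t hline).smul
      ((hg.differentiable one_ne_zero _).hasFDerivAt.comp_hasDerivAt t hcurve)
  have hline : Continuous fun q : ℝ × E => (1 : E →L[ℝ] E) + q.1 • fderiv ℝ θ q.2 := by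
    have := hθ.continuous_fderiv one_ne_zero
    fun_prop
  have hcurve : Continuous fun q : ℝ × E => (q.2 + q.1 • θ q.2, q.1) := by
    have := hθ.continuous
    fun_prop
  have hJ := ContinuousLinearMap.continuous_det.comp hline
  have hG := hg.continuous.comp hcurve
  have hH' : Continuous (Function.uncurry fun t y => J t y • G' t y + J' t y • G t y) :=
    (hJ.smul ((hg.continuous_fderiv one_ne_zero |>.comp hcurve).clm_apply
      (by have := hθ.continuous; fun_prop))).add
      (((hdet.continuous_fderiv one_ne_zero |>.comp hline).clm_apply
        (hθ.continuous_fderiv one_ne_zero |>.comp continuous_snd)).smul hG)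
  refine (hasDerivAt_setIntegral_of_continuous_deriv hΩ hΩb.isCompact_closure
    (fun t => (hJ.smul hG).comp (Continuous.prodMk_right t)) hH' hderiv 0).congr_deriv ?_
  congr 1
  ext y
  simp [J, J', G, G', materialDeriv, ContinuousLinearMap.fderiv_det_one_apply,
    ContinuousLinearMap.det]

theorem hasDerivAt_integral_image_add_smul [μ.IsAddHaarMeasure] (hΩ : MeasurableSet Ω)
    (hΩb : Bornology.IsBounded Ω) (hθ : ContDiff ℝ 1 θ) {g : E × ℝ → F} (hg : ContDiff ℝ 1 g) :
    HasDerivAt (fun t : ℝ => ∫ x in (fun y => y + t • θ y) '' Ω, g (x, t) ∂μ)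
      (∫ y in Ω, materialDeriv θ g (y, 0) + LinearMap.trace ℝ E (fderiv ℝ θ y) • g (y, 0) ∂μ)
      0 :=
  (hasDerivAt_integral_det_smul_comp_add_smul μ hΩ hΩb hθ hg).congr_of_eventuallyEq <| by
    filter_upwards [eventually_integral_image_add_smul_eq (F := F) μ hΩ hΩb hθ] with t ht
    exact ht _

end Transport

section SpatialGradient

variable {E : Type*} [NormedAddCommGroup E] [InnerProductSpace ℝ E] [CompleteSpace E]
  {f : E × ℝ → ℝ}

noncomputable def spatialGradient (f : E × ℝ → ℝ) (p : E × ℝ) : E :=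
  gradient (fun x => f (x, p.2)) p.1

noncomputable def spatialGradientCLM : ((E × ℝ) →L[ℝ] ℝ) →L[ℝ] E :=
  (toDual ℝ E).symm.toContinuousLinearEquiv.toContinuousLinearMap ∘L
    (ContinuousLinearMap.compL ℝ E (E × ℝ) ℝ).flip (ContinuousLinearMap.inl ℝ E ℝ)

theorem inner_spatialGradientCLM (L : (E × ℝ) →L[ℝ] ℝ) (u : E) :
    ⟪spatialGradientCLM L, u⟫_ℝ = L (u, 0) := by
  simp [spatialGradientCLM, toDual_symm_apply]

theorem spatialGradient_eq_comp (hf : Differentiable ℝ f) :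
    spatialGradient f = spatialGradientCLM ∘ fderiv ℝ f := by
  ext1 p
  have hsec : HasFDerivAt (fun x => f (x, p.2)) ((fderiv ℝ f p).comp (.inl ℝ E ℝ)) p.1 :=
    (hf p).hasFDerivAt.comp p.1 (hasFDerivAt_prodMk_left p.1 p.2)
  rw [spatialGradient, gradient, hsec.fderiv]
  rfl

theorem inner_spatialGradient (hf : Differentiable ℝ f) (p : E × ℝ) (u : E) :
    ⟪spatialGradient f p, u⟫_ℝ = fderiv ℝ f p (u, 0) := by
  rw [spatialGradient_eq_comp hf, Function.comp_apply, inner_spatialGradientCLM]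

theorem ContDiff.spatialGradient {m n : WithTop ℕ∞} (hf : ContDiff ℝ n f) (hmn : m + 1 ≤ n) :
    ContDiff ℝ m (_root_.spatialGradient f) := by
  rw [spatialGradient_eq_comp ((hf.of_le hmn).differentiable (by simp))]
  exact spatialGradientCLM.contDiff.comp (hf.fderiv_right hmn)

theorem materialDeriv_spatialGradient (hf : ContDiff ℝ 2 f) {θ : E → E} (p : E × ℝ)
    (hθ : DifferentiableAt ℝ θ p.1) :
    materialDeriv θ (spatialGradient f) p =
      spatialGradient (materialDeriv θ f) p
        - ContinuousLinearMap.adjoint (fderiv ℝ θ p.1) (spatialGradient f p) := by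
  obtain ⟨x, t⟩ := p
  have hf1 : ContDiff ℝ 1 (fderiv ℝ f) := hf.fderiv_right (by norm_num)
  have hd := hf.differentiable (by norm_num)
  set f'' := fderiv ℝ (fderiv ℝ f) (x, t)
  have hgrad : HasFDerivAt (spatialGradient f) (spatialGradientCLM ∘L f'') (x, t) := by
    rw [spatialGradient_eq_comp hd]
    exact spatialGradientCLM.hasFDerivAt.comp _ (hf1.differentiable one_ne_zero _).hasFDerivAt
  have hmat : HasFDerivAt (fun z => fderiv ℝ f (z, t) (θ z, 1))
      ((fderiv ℝ f (x, t)).comp ((fderiv ℝ θ x).prod 0) + (f''.comp (.inl ℝ E ℝ)).flip (θ x, 1))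
      x :=
    ((hf1.differentiable one_ne_zero _).hasFDerivAt.comp x (hasFDerivAt_prodMk_left x t)).clm_apply
      (hθ.hasFDerivAt.prodMk (hasFDerivAt_const 1 x))
  refine ext_inner_right ℝ fun u => ?_
  have hsymm : f'' (θ x, 1) (u, 0) = f'' (u, 0) (θ x, 1) :=
    hf.contDiffAt.isSymmSndFDerivAt (by simp) _ _
  rw [inner_sub_left, ContinuousLinearMap.adjoint_inner_left, inner_spatialGradient hd,
    materialDeriv, hgrad.fderiv, spatialGradient, inner_gradient_left]
  change _ = fderiv ℝ (fun z => fderiv ℝ f (z, t) (θ z, 1)) x u - _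
  rw [hmat.fderiv]
  simp [inner_spatialGradientCLM, hsymm]

theorem materialDeriv_inner_spatialGradient {w v : E × ℝ → ℝ} (hw : ContDiff ℝ 2 w)
    (hv : ContDiff ℝ 2 v) {θ : E → E} (p : E × ℝ) (hθ : DifferentiableAt ℝ θ p.1) :
    materialDeriv θ (fun q => ⟪spatialGradient w q, spatialGradient v q⟫_ℝ) p =
      ⟪spatialGradient (materialDeriv θ w) p, spatialGradient v p⟫_ℝ
        + ⟪spatialGradient (materialDeriv θ v) p, spatialGradient w p⟫_ℝ
        - ⟪spatialGradient w p, fderiv ℝ θ p.1 (spatialGradient v p)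
            + ContinuousLinearMap.adjoint (fderiv ℝ θ p.1) (spatialGradient v p)⟫_ℝ := by
  have hdw := (hw.spatialGradient (m := 1) (by norm_num)).differentiable one_ne_zero p
  have hdv := (hv.spatialGradient (m := 1) (by norm_num)).differentiable one_ne_zero p
  have hw' := materialDeriv_spatialGradient hw p hθ
  have hv' := materialDeriv_spatialGradient hv p hθ
  unfold materialDeriv at hw' hv' ⊢
  rw [fderiv_inner_apply ℝ hdw hdv, hw', hv']
  simp only [inner_sub_left, inner_sub_right, inner_add_right,
    ContinuousLinearMap.adjoint_inner_left, ContinuousLinearMap.adjoint_inner_right]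
  rw [real_inner_comm (spatialGradient w p)]
  ring

end SpatialGradient

theorem shape_derivative_dirichlet_energy_general
    (Ω : Set (EuclideanSpace ℝ (Fin 2)))
    (hΩm : MeasurableSet Ω) (hΩb : Bornology.IsBounded Ω)
    (θ : EuclideanSpace ℝ (Fin 2) → EuclideanSpace ℝ (Fin 2))
    (hθ : ContDiff ℝ 1 θ)
    (w v : EuclideanSpace ℝ (Fin 2) × ℝ → ℝ)
    (hw : ContDiff ℝ 2 w)
    (hv : ContDiff ℝ 2 v) :
    HasDerivAt
      (fun t : ℝ => ∫ x in (fun y => y + t • θ y) '' Ω,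
        (inner ℝ (gradient (fun z => w (z, t)) x) (gradient (fun z => v (z, t)) x) : ℝ))
      (∫ x in Ω,
        ((LinearMap.trace ℝ (EuclideanSpace ℝ (Fin 2)) (fderiv ℝ θ x).toLinearMap) *
            (inner ℝ (gradient (fun z => w (z, (0 : ℝ))) x)
              (gradient (fun z => v (z, (0 : ℝ))) x) : ℝ)
          - (inner ℝ (gradient (fun z => w (z, (0 : ℝ))) x)
              ((fderiv ℝ θ x) (gradient (fun z => v (z, (0 : ℝ))) x) +
                (ContinuousLinearMap.adjoint (fderiv ℝ θ x))
                  (gradient (fun z => v (z, (0 : ℝ))) x)) : ℝ)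
          + (inner ℝ (gradient (fun z => (fderiv ℝ w (z, (0 : ℝ))) (θ z, (1 : ℝ))) x)
              (gradient (fun z => v (z, (0 : ℝ))) x) : ℝ)
          + (inner ℝ (gradient (fun z => (fderiv ℝ v (z, (0 : ℝ))) (θ z, (1 : ℝ))) x)
              (gradient (fun z => w (z, (0 : ℝ))) x) : ℝ)))
      0 := by
  have hg : ContDiff ℝ 1 fun p => ⟪spatialGradient w p, spatialGradient v p⟫_ℝ :=
    (hw.spatialGradient (by norm_num)).inner ℝ (hv.spatialGradient (by norm_num))
  -- the integrand is `⟪spatialGradient w (x, t), spatialGradient v (x, t)⟫` by definition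
  refine (hasDerivAt_integral_image_add_smul volume hΩm hΩb hθ hg).congr_deriv ?_
  congr 1
  ext x
  rw [materialDeriv_inner_spatialGradient hw hv (x, 0) (hθ.differentiable one_ne_zero x),
    smul_eq_mul]
  simp only [spatialGradient, materialDeriv]
  ring

/-- Shape derivative of the Dirichlet energy (Lemma 4.2 of the paper): for the deformation
`T_t(x) = x + tθ(x)`, the map `t ↦ ∫_{T_t(Ω)} ∇w(x,t) · ∇v(x,t) dx` is differentiable at
`t = 0` with derivative
`∫_Ω (div θ) ∇w·∇v − ∇w · S(θ)∇v + ∇ẇ·∇v + ∇v̇·∇w`, where `S(θ) = Dθ + (Dθ)ᵀ` and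
`ẇ(x) = fderiv ℝ w (x,0) (θ x, 1)` is the material derivative. -/
theorem shape_derivative_dirichlet_energy
    (Ω : Set (EuclideanSpace ℝ (Fin 2)))
    (hΩm : MeasurableSet Ω) (hΩb : Bornology.IsBounded Ω)
    (θ : EuclideanSpace ℝ (Fin 2) → EuclideanSpace ℝ (Fin 2))
    (hθ : ContDiff ℝ 1 θ) (hθc : HasCompactSupport θ)
    (w v : EuclideanSpace ℝ (Fin 2) × ℝ → ℝ)
    (hw : ContDiff ℝ 2 w) (hwc : HasCompactSupport w)
    (hv : ContDiff ℝ 2 v) (hvc : HasCompactSupport v) :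
    HasDerivAt
      (fun t : ℝ => ∫ x in (fun y => y + t • θ y) '' Ω,
        (inner ℝ (gradient (fun z => w (z, t)) x) (gradient (fun z => v (z, t)) x) : ℝ))
      (∫ x in Ω,
        ((LinearMap.trace ℝ (EuclideanSpace ℝ (Fin 2)) (fderiv ℝ θ x).toLinearMap) *
            (inner ℝ (gradient (fun z => w (z, (0 : ℝ))) x)
              (gradient (fun z => v (z, (0 : ℝ))) x) : ℝ)
          - (inner ℝ (gradient (fun z => w (z, (0 : ℝ))) x)
              ((fderiv ℝ θ x) (gradient (fun z => v (z, (0 : ℝ))) x) +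
                (ContinuousLinearMap.adjoint (fderiv ℝ θ x))
                  (gradient (fun z => v (z, (0 : ℝ))) x)) : ℝ)
          + (inner ℝ (gradient (fun z => (fderiv ℝ w (z, (0 : ℝ))) (θ z, (1 : ℝ))) x)
              (gradient (fun z => v (z, (0 : ℝ))) x) : ℝ)
          + (inner ℝ (gradient (fun z => (fderiv ℝ v (z, (0 : ℝ))) (θ z, (1 : ℝ))) x)
              (gradient (fun z => w (z, (0 : ℝ))) x) : ℝ)))
      0 :=
  shape_derivative_dirichlet_energy_general Ω hΩm hΩb θ hθ w v hw hv
end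

section
/- Let γ : [0,1] → ℝ² be a C¹ regular curve (γ'(s) ≠ 0 for all s), let θ : ℝ² → ℝ² be a C¹ vector field, let w : ℝ² × ℝ → ℝ be C² and v : ℝ² × ℝ → ℝ be C¹. For t near 0 let γ_t(s) = γ(s) + tθ(γ(s)) be the deformed curve, with tangent γ_t'(s) = (I + tDθ(γ(s)))γ'(s), and let n_t(s) be the unit normal obtained by rotating the unit tangent γ_t'(s)/‖γ_t'(s)‖ by π/2; write n(s) = n_0(s). Then the function t ↦ ∫₀¹ ⟨∇_x w(γ_t(s), t), n_t(s)⟩ · v(γ_t(s), t) · ‖γ_t'(s)‖ ds is differentiable at t = 0 with derivative ∫₀¹ [ (div θ)⟨∇w, n(s)⟩ v − ⟨S(θ)∇w, n(s)⟩ v + ⟨∇ẇ, n(s)⟩ v + ⟨∇w, n(s)⟩ v̇ ] evaluated at x = γ(s), t = 0, multiplied by ‖γ'(s)‖ and integrated in s. -/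
/-!
Writing `R` for the rotation by `π/2`, `n_t ‖γ_t'‖ = R γ_t'` with `γ_t' = γ' + t Dθ γ'`, so the
integrand is `⟨∇w(γ_t, t), R γ_t'⟩ v(γ_t, t)`: the normalisation disappears, and the integrand is
`C¹` in `t` with a jointly continuous derivative, so one differentiates under the integral sign.
At `t = 0` the tangent contributes `⟨∇w, R Dθ γ'⟩ = div θ ⟨∇w, Rγ'⟩ - ⟨Dθ ∇w, Rγ'⟩` (the `2 × 2`
identity `RB + BᵀR = (tr B) R`), and the time derivative of `∇w(γ_t, t)` is `∇ẇ - (Dθ)ᵀ∇w` by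
symmetry of `D²w`; together they give the `S(θ)` term.
-/

open MeasureTheory

open InnerProductSpace ContinuousLinearMap

local notation "ℝ²" => EuclideanSpace ℝ (Fin 2)

@[simp] theorem rotHalfPi_apply_zero (v : ℝ²) : rotHalfPi v 0 = -v 1 := rfl

@[simp] theorem rotHalfPi_apply_one (v : ℝ²) : rotHalfPi v 1 = v 0 := rfl

theorem rotHalfPi_add (a b : ℝ²) : rotHalfPi (a + b) = rotHalfPi a + rotHalfPi b := by
  ext i; fin_cases i <;> simp [add_comm]

theorem rotHalfPi_smul (c : ℝ) (a : ℝ²) : rotHalfPi (c • a) = c • rotHalfPi a := by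
  ext i; fin_cases i <;> simp

noncomputable def rotHalfPiCLM : ℝ² →L[ℝ] ℝ² :=
  LinearMap.toContinuousLinearMap
    { toFun := rotHalfPi, map_add' := rotHalfPi_add, map_smul' := rotHalfPi_smul }

@[fun_prop] theorem continuous_rotHalfPi : Continuous rotHalfPi := rotHalfPiCLM.continuous

@[simp] theorem rotHalfPi_zero : rotHalfPi 0 = 0 := map_zero rotHalfPiCLM

theorem inner_rotHalfPi (g v : ℝ²) : ⟪g, rotHalfPi v⟫_ℝ = g 1 * v 0 - g 0 * v 1 := by
  simp only [PiLp.inner_apply, RCLike.inner_apply, Real.ringHom_apply, Fin.sum_univ_two,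
    rotHalfPi_apply_zero, rotHalfPi_apply_one]
  ring

theorem trace_eq_apply_single_add (B : ℝ² →L[ℝ] ℝ²) :
    LinearMap.trace ℝ ℝ² B = B (EuclideanSpace.single 0 1) 0 + B (EuclideanSpace.single 1 1) 1 := by
  rw [LinearMap.trace_eq_matrix_trace ℝ (EuclideanSpace.basisFun (Fin 2) ℝ).toBasis]
  simp [Matrix.trace, LinearMap.toMatrix_apply, Fin.sum_univ_two]

theorem apply_eq_apply_single_add (B : ℝ² →L[ℝ] ℝ²) (u : ℝ²) :
    B u = u 0 • B (EuclideanSpace.single 0 1) + u 1 • B (EuclideanSpace.single 1 1) := by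
  rw [← map_smul, ← map_smul, ← map_add]
  congr 1
  ext i; fin_cases i <;> simp

/-- The `2 × 2` identity `R B + Bᵀ R = (tr B) R` for the rotation `R`. -/
theorem inner_rotHalfPi_apply (B : ℝ² →L[ℝ] ℝ²) (g u : ℝ²) :
    ⟪g, rotHalfPi (B u)⟫_ℝ
      = LinearMap.trace ℝ ℝ² B * ⟪g, rotHalfPi u⟫_ℝ - ⟪B g, rotHalfPi u⟫_ℝ := by
  rw [trace_eq_apply_single_add, inner_rotHalfPi, inner_rotHalfPi, inner_rotHalfPi,
    apply_eq_apply_single_add B u, apply_eq_apply_single_add B g]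
  simp only [PiLp.add_apply, PiLp.smul_apply, smul_eq_mul]
  ring

theorem inner_rotHalfPi_inv_norm_smul_mul_norm (g u : ℝ²) :
    ⟪g, rotHalfPi (‖u‖⁻¹ • u)⟫_ℝ * ‖u‖ = ⟪g, rotHalfPi u⟫_ℝ := by
  rcases eq_or_ne u 0 with rfl | hu
  · simp
  · have : ‖u‖ ≠ 0 := norm_ne_zero_iff.mpr hu
    rw [rotHalfPi_smul, inner_smul_right]
    field_simp

section PartialGradient

variable {E F : Type*} [NormedAddCommGroup E] [InnerProductSpace ℝ E] [CompleteSpace E]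

noncomputable def partialGradient (w : E × F → ℝ) (p : E × F) : E :=
  gradient (fun z => w (z, p.2)) p.1

theorem gradient_slice_eq_partialGradient (w : E × F → ℝ) (x : E) (t : F) :
    gradient (fun z => w (z, t)) x = partialGradient w (x, t) :=
  rfl

variable [NormedAddCommGroup F] [NormedSpace ℝ F]

noncomputable def toDualSymmRestrictFst : (E × F →L[ℝ] ℝ) →L[ℝ] E :=
  (toDual ℝ E).symm.toContinuousLinearEquiv.toContinuousLinearMap ∘L
    (compL ℝ E (E × F) ℝ).flip (inl ℝ E F)

theorem inner_toDualSymmRestrictFst (φ : (E × F →L[ℝ] ℝ)) (y : E) :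
    ⟪toDualSymmRestrictFst φ, y⟫_ℝ = φ (y, 0) := by
  simp [toDualSymmRestrictFst, toDual_symm_apply]

variable {w : E × F → ℝ}

theorem partialGradient_eq {p : E × F} (hw : DifferentiableAt ℝ w p) :
    partialGradient w p = toDualSymmRestrictFst (fderiv ℝ w p) := by
  have hslice : HasFDerivAt (fun z => w (z, p.2)) ((fderiv ℝ w p).comp (inl ℝ E F)) p.1 :=
    hw.hasFDerivAt.comp p.1 (hasFDerivAt_prodMk_left p.1 p.2)
  rw [partialGradient, gradient, hslice.fderiv]
  rfl

theorem inner_partialGradient {p : E × F} (hw : DifferentiableAt ℝ w p) (y : E) :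
    ⟪partialGradient w p, y⟫_ℝ = fderiv ℝ w p (y, 0) := by
  rw [partialGradient_eq hw, inner_toDualSymmRestrictFst]

theorem partialGradient_eq_comp (hw : Differentiable ℝ w) :
    partialGradient w = toDualSymmRestrictFst ∘ fderiv ℝ w :=
  funext fun p => partialGradient_eq (hw p)

theorem contDiff_partialGradient {m n : WithTop ℕ∞} (hw : ContDiff ℝ n w) (hmn : m + 1 ≤ n) :
    ContDiff ℝ m (partialGradient w) := by
  rw [partialGradient_eq_comp ((hw.of_le (le_trans le_add_self hmn)).differentiable one_ne_zero)]
  exact toDualSymmRestrictFst.contDiff.comp (hw.fderiv_right hmn)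

theorem inner_fderiv_partialGradient (hw : ContDiff ℝ 2 w) (p q : E × F) (y : E) :
    ⟪fderiv ℝ (partialGradient w) p q, y⟫_ℝ = fderiv ℝ (fderiv ℝ w) p q (y, 0) := by
  have hdw : ContDiff ℝ 1 (fderiv ℝ w) := hw.fderiv_right le_rfl
  have hcomp := (toDualSymmRestrictFst (E := E) (F := F)).hasFDerivAt.comp p
    (hdw.differentiable one_ne_zero p).hasFDerivAt
  rw [partialGradient_eq_comp (hw.differentiable (by simp)), hcomp.fderiv, comp_apply,
    inner_toDualSymmRestrictFst]

/-- For `c = 1` this is the gradient of the material derivative `ẇ`; symmetry of `D²w` is what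
turns `Dθ` into its adjoint. -/
theorem gradient_fderiv_apply_prodMk (hw : ContDiff ℝ 2 w) {θ : E → E} {x : E}
    (hθ : DifferentiableAt ℝ θ x) (t c : F) :
    gradient (fun z => fderiv ℝ w (z, t) (θ z, c)) x
      = fderiv ℝ (partialGradient w) (x, t) (θ x, c)
        + adjoint (fderiv ℝ θ x) (partialGradient w (x, t)) := by
  have hdw : ContDiff ℝ 1 (fderiv ℝ w) := hw.fderiv_right le_rfl
  have hslice : HasFDerivAt (fun z => fderiv ℝ w (z, t))
      ((fderiv ℝ (fderiv ℝ w) (x, t)).comp (inl ℝ E F)) x :=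
    HasFDerivAt.comp (g := fderiv ℝ w) (f := fun z => (z, t)) x
      (hdw.differentiable one_ne_zero (x, t)).hasFDerivAt (hasFDerivAt_prodMk_left x t)
  have hfield : HasFDerivAt (fun z => (θ z, c)) ((fderiv ℝ θ x).prod 0) x :=
    hθ.hasFDerivAt.prodMk (hasFDerivAt_const c x)
  have hsymm := (hw.contDiffAt (x := (x, t))).isSymmSndFDerivAt (by simp)
  refine ext_inner_right ℝ fun y => ?_
  rw [inner_add_left, adjoint_inner_left, inner_partialGradient (hw.differentiable (by simp) _),
    inner_fderiv_partialGradient hw, gradient, toDual_symm_apply,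
    (hslice.clm_apply hfield).fderiv, hsymm]
  simp [add_comm]

theorem hasDerivAt_intervalIntegral_of_continuous {E : Type*} [NormedAddCommGroup E]
    [NormedSpace ℝ E] {F F' : ℝ → ℝ → E} {a b t₀ : ℝ}
    (hF : Continuous (Function.uncurry F)) (hF' : Continuous (Function.uncurry F'))
    (hderiv : ∀ t s, HasDerivAt (F · s) (F' t s) t) :
    HasDerivAt (fun t => ∫ s in a..b, F t s) (∫ s in a..b, F' t₀ s) t₀ := by
  obtain ⟨C, hC⟩ := ((isCompact_closedBall t₀ 1).prod isCompact_uIcc).exists_bound_of_continuousOn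
    hF'.continuousOn
  exact (intervalIntegral.hasDerivAt_integral_of_dominated_loc_of_deriv_le (bound := fun _ => C)
    (Metric.closedBall_mem_nhds t₀ one_pos)
    (.of_forall fun t => (hF.uncurry_left t).aestronglyMeasurable)
    ((hF.uncurry_left t₀).intervalIntegrable a b) (hF'.uncurry_left t₀).aestronglyMeasurable
    (.of_forall fun s hs t ht => hC (t, s) ⟨ht, Set.uIoc_subset_uIcc hs⟩)
    intervalIntegrable_const (.of_forall fun s _ t _ => hderiv t s)).2

section DeformedFlux

variable (θ : ℝ² → ℝ²) (w v : ℝ² × ℝ → ℝ)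

/-- The integrand `⟨∇w, n_t⟩ v ‖γ_t'‖` at the point `x` of the curve with tangent `u`, once
`‖γ_t'‖` has cancelled the normalisation of `n_t`. -/
noncomputable def deformedFlux (x u : ℝ²) (t : ℝ) : ℝ :=
  ⟪partialGradient w (x + t • θ x, t), rotHalfPi (u + t • fderiv ℝ θ x u)⟫_ℝ * v (x + t • θ x, t)

noncomputable def deformedFluxDeriv (x u : ℝ²) (t : ℝ) : ℝ :=
  (⟪partialGradient w (x + t • θ x, t), rotHalfPi (fderiv ℝ θ x u)⟫_ℝ
      + ⟪fderiv ℝ (partialGradient w) (x + t • θ x, t) (θ x, 1),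
          rotHalfPi (u + t • fderiv ℝ θ x u)⟫_ℝ) * v (x + t • θ x, t)
    + ⟪partialGradient w (x + t • θ x, t), rotHalfPi (u + t • fderiv ℝ θ x u)⟫_ℝ
      * fderiv ℝ v (x + t • θ x, t) (θ x, 1)

variable {θ w v}

theorem hasDerivAt_deformedFlux (hw : ContDiff ℝ 2 w) (hv : Differentiable ℝ v) (x u : ℝ²)
    (t : ℝ) : HasDerivAt (deformedFlux θ w v x u) (deformedFluxDeriv θ w v x u t) t := by
  have hpath : HasDerivAt (fun τ : ℝ => (x + τ • θ x, τ)) (θ x, 1) t := by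
    simpa using (((hasDerivAt_id t).smul_const (θ x)).const_add x).prodMk (hasDerivAt_id t)
  have hgrad := ((contDiff_partialGradient hw (m := 1) le_rfl).differentiable one_ne_zero
    (x + t • θ x, t)).hasFDerivAt.comp_hasDerivAt (f := fun τ : ℝ => (x + τ • θ x, τ)) t hpath
  have htangent : HasDerivAt (fun τ : ℝ => u + τ • fderiv ℝ θ x u) (fderiv ℝ θ x u) t := by
    simpa using ((hasDerivAt_id t).smul_const (fderiv ℝ θ x u)).const_add u
  have hnormal : HasDerivAt (fun τ : ℝ => rotHalfPi (u + τ • fderiv ℝ θ x u))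
      (rotHalfPi (fderiv ℝ θ x u)) t :=
    rotHalfPiCLM.hasFDerivAt.comp_hasDerivAt t htangent
  exact (hgrad.inner ℝ hnormal).mul
    ((hv _).hasFDerivAt.comp_hasDerivAt (f := fun τ : ℝ => (x + τ • θ x, τ)) t hpath)

theorem Continuous.deformedFlux (hθ : ContDiff ℝ 1 θ) (hw : ContDiff ℝ 2 w) (hv : Continuous v)
    {α : Type*} [TopologicalSpace α] {x u : α → ℝ²} {t : α → ℝ} (hx : Continuous x)
    (hu : Continuous u) (ht : Continuous t) :
    Continuous fun a => deformedFlux θ w v (x a) (u a) (t a) := by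
  have := hθ.continuous
  have := hθ.continuous_fderiv one_ne_zero
  have := (contDiff_partialGradient hw (m := 1) le_rfl).continuous
  unfold _root_.deformedFlux
  fun_prop

theorem Continuous.deformedFluxDeriv (hθ : ContDiff ℝ 1 θ) (hw : ContDiff ℝ 2 w)
    (hv : ContDiff ℝ 1 v) {α : Type*} [TopologicalSpace α] {x u : α → ℝ²} {t : α → ℝ}
    (hx : Continuous x) (hu : Continuous u) (ht : Continuous t) :
    Continuous fun a => deformedFluxDeriv θ w v (x a) (u a) (t a) := by
  have := hθ.continuous
  have := hθ.continuous_fderiv one_ne_zero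
  have := (contDiff_partialGradient hw (m := 1) le_rfl).continuous
  have := (contDiff_partialGradient hw (m := 1) le_rfl).continuous_fderiv one_ne_zero
  have := hv.continuous
  have := hv.continuous_fderiv one_ne_zero
  unfold _root_.deformedFluxDeriv
  fun_prop

theorem deformedFluxDeriv_zero {x : ℝ²} (hθ : DifferentiableAt ℝ θ x) (hw : ContDiff ℝ 2 w)
    (u : ℝ²) :
    deformedFluxDeriv θ w v x u 0 =
      (LinearMap.trace ℝ ℝ² (fderiv ℝ θ x).toLinearMap
            * ⟪gradient (fun z => w (z, 0)) x, rotHalfPi (‖u‖⁻¹ • u)⟫_ℝ * v (x, 0)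
        - ⟪fderiv ℝ θ x (gradient (fun z => w (z, 0)) x)
            + adjoint (fderiv ℝ θ x) (gradient (fun z => w (z, 0)) x),
            rotHalfPi (‖u‖⁻¹ • u)⟫_ℝ * v (x, 0)
        + ⟪gradient (fun z => fderiv ℝ w (z, 0) (θ z, 1)) x, rotHalfPi (‖u‖⁻¹ • u)⟫_ℝ * v (x, 0)
        + ⟪gradient (fun z => w (z, 0)) x, rotHalfPi (‖u‖⁻¹ • u)⟫_ℝ
            * fderiv ℝ v (x, 0) (θ x, 1)) * ‖u‖ := by
  rw [gradient_fderiv_apply_prodMk hw hθ, gradient_slice_eq_partialGradient]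
  rcases eq_or_ne u 0 with rfl | hu
  · simp [deformedFluxDeriv]
  · have : ‖u‖ ≠ 0 := norm_ne_zero_iff.mpr hu
    simp only [deformedFluxDeriv, zero_smul, add_zero, inner_rotHalfPi_apply, rotHalfPi_smul,
      inner_smul_right, inner_add_left]
    field_simp
    ring

end DeformedFlux

theorem shape_derivative_nitsche_boundary_term_general
    (γ : ℝ → EuclideanSpace ℝ (Fin 2)) (hγ : ContDiff ℝ 1 γ)
    (θ : EuclideanSpace ℝ (Fin 2) → EuclideanSpace ℝ (Fin 2)) (hθ : ContDiff ℝ 1 θ)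
    (w : EuclideanSpace ℝ (Fin 2) × ℝ → ℝ) (hw : ContDiff ℝ 2 w)
    (v : EuclideanSpace ℝ (Fin 2) × ℝ → ℝ) (hv : ContDiff ℝ 1 v) :
    HasDerivAt
      (fun t : ℝ => ∫ s in (0 : ℝ)..1,
        let γt : EuclideanSpace ℝ (Fin 2) := γ s + t • θ (γ s)
        let γt' : EuclideanSpace ℝ (Fin 2) := deriv γ s + t • (fderiv ℝ θ (γ s)) (deriv γ s)
        let nt : EuclideanSpace ℝ (Fin 2) := rotHalfPi (‖γt'‖⁻¹ • γt')
        (inner ℝ (gradient (fun z => w (z, t)) γt) nt : ℝ) * v (γt, t) * ‖γt'‖)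
      (∫ s in (0 : ℝ)..1,
        let x : EuclideanSpace ℝ (Fin 2) := γ s
        let nrm : EuclideanSpace ℝ (Fin 2) := rotHalfPi (‖deriv γ s‖⁻¹ • deriv γ s)
        let gradw : EuclideanSpace ℝ (Fin 2) := gradient (fun z => w (z, (0 : ℝ))) x
        ((LinearMap.trace ℝ (EuclideanSpace ℝ (Fin 2)) (fderiv ℝ θ x).toLinearMap) *
            (inner ℝ gradw nrm : ℝ) * v (x, 0)
          - (inner ℝ ((fderiv ℝ θ x) gradw +
              (ContinuousLinearMap.adjoint (fderiv ℝ θ x)) gradw) nrm : ℝ) * v (x, 0)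
          + (inner ℝ (gradient (fun z => (fderiv ℝ w (z, (0 : ℝ))) (θ z, (1 : ℝ))) x) nrm : ℝ) *
              v (x, 0)
          + (inner ℝ gradw nrm : ℝ) * (fderiv ℝ v (x, (0 : ℝ))) (θ x, (1 : ℝ))) * ‖deriv γ s‖)
      0 := by
  have hpoint : Continuous fun p : ℝ × ℝ => γ p.2 := hγ.continuous.comp continuous_snd
  have htangent : Continuous fun p : ℝ × ℝ => deriv γ p.2 :=
    (hγ.continuous_deriv le_rfl).comp continuous_snd
  have hderiv := hasDerivAt_intervalIntegral_of_continuous (a := 0) (b := 1) (t₀ := 0)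
    (F := fun t s => deformedFlux θ w v (γ s) (deriv γ s) t)
    (F' := fun t s => deformedFluxDeriv θ w v (γ s) (deriv γ s) t)
    (.deformedFlux hθ hw hv.continuous hpoint htangent continuous_fst)
    (.deformedFluxDeriv hθ hw hv hpoint htangent continuous_fst)
    (fun t s => hasDerivAt_deformedFlux hw (hv.differentiable one_ne_zero) (γ s) (deriv γ s) t)
  refine (hderiv.congr_deriv ?_).congr_of_eventuallyEq (.of_forall fun t => ?_)
  · exact intervalIntegral.integral_congr fun s _ =>
      deformedFluxDeriv_zero (hθ.differentiable one_ne_zero _) hw _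
  · refine intervalIntegral.integral_congr fun s _ => ?_
    dsimp only
    rw [mul_right_comm, inner_rotHalfPi_inv_norm_smul_mul_norm]
    rfl

/-- Shape derivative of the Nitsche boundary term `∫_Γ (∂w/∂n) v ds` (Lemma 4.3 of the
paper), for a parametrized `C¹` regular curve `γ` in `ℝ²` deformed by `T_t(x) = x + tθ(x)`:
the map `t ↦ ∫₀¹ ⟨∇w(γ_t(s), t), n_t(s)⟩ v(γ_t(s), t) ‖γ_t'(s)‖ ds` is differentiable at
`t = 0` with derivative
`∫₀¹ [(div θ)⟨∇w, n⟩v − ⟨S(θ)∇w, n⟩v + ⟨∇ẇ, n⟩v + ⟨∇w, n⟩v̇] ‖γ'‖ ds`, where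
`S(θ) = Dθ + (Dθ)ᵀ` and `ẇ(x) = fderiv ℝ w (x,0) (θ x, 1)` is the material derivative. -/
theorem shape_derivative_nitsche_boundary_term
    (γ : ℝ → EuclideanSpace ℝ (Fin 2)) (hγ : ContDiff ℝ 1 γ)
    (hreg : ∀ s ∈ Set.Icc (0 : ℝ) 1, deriv γ s ≠ 0)
    (θ : EuclideanSpace ℝ (Fin 2) → EuclideanSpace ℝ (Fin 2)) (hθ : ContDiff ℝ 1 θ)
    (w : EuclideanSpace ℝ (Fin 2) × ℝ → ℝ) (hw : ContDiff ℝ 2 w)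
    (v : EuclideanSpace ℝ (Fin 2) × ℝ → ℝ) (hv : ContDiff ℝ 1 v) :
    HasDerivAt
      (fun t : ℝ => ∫ s in (0 : ℝ)..1,
        let γt : EuclideanSpace ℝ (Fin 2) := γ s + t • θ (γ s)
        let γt' : EuclideanSpace ℝ (Fin 2) := deriv γ s + t • (fderiv ℝ θ (γ s)) (deriv γ s)
        let nt : EuclideanSpace ℝ (Fin 2) := rotHalfPi (‖γt'‖⁻¹ • γt')
        (inner ℝ (gradient (fun z => w (z, t)) γt) nt : ℝ) * v (γt, t) * ‖γt'‖)
      (∫ s in (0 : ℝ)..1,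
        let x : EuclideanSpace ℝ (Fin 2) := γ s
        let nrm : EuclideanSpace ℝ (Fin 2) := rotHalfPi (‖deriv γ s‖⁻¹ • deriv γ s)
        let gradw : EuclideanSpace ℝ (Fin 2) := gradient (fun z => w (z, (0 : ℝ))) x
        ((LinearMap.trace ℝ (EuclideanSpace ℝ (Fin 2)) (fderiv ℝ θ x).toLinearMap) *
            (inner ℝ gradw nrm : ℝ) * v (x, 0)
          - (inner ℝ ((fderiv ℝ θ x) gradw +
              (ContinuousLinearMap.adjoint (fderiv ℝ θ x)) gradw) nrm : ℝ) * v (x, 0)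
          + (inner ℝ (gradient (fun z => (fderiv ℝ w (z, (0 : ℝ))) (θ z, (1 : ℝ))) x) nrm : ℝ) *
              v (x, 0)
          + (inner ℝ gradw nrm : ℝ) * (fderiv ℝ v (x, (0 : ℝ))) (θ x, (1 : ℝ))) * ‖deriv γ s‖)
      0 :=
  shape_derivative_nitsche_boundary_term_general γ hγ θ hθ w hw v hv
end PartialGradient
end

section
/- Let V be a real normed vector space, let a : ℝ → (continuous bilinear forms on V × V) be differentiable at 0 with a(0) = a₀ and derivative c, let l : V → ℝ be a continuous linear functional, and let j : V → ℝ be differentiable at u₀. Let u, p : ℝ → V be differentiable at 0 with u(0) = u₀ and p(0) = p₀, and assume the state equation a₀(u₀, v) = l(v) for all v ∈ V and the adjoint equation a₀(v, p₀) = Dj(u₀)(v) for all v ∈ V. Then the Lagrangian t ↦ j(u(t)) − a(t)(u(t), p(t)) + l(p(t)) is differentiable at t = 0 with derivative −c(u₀, p₀). In particular the derivative does not depend on the derivatives of the curves u and p. -/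
/-- Adjoint-cancellation identity for Lagrangians: if the state and adjoint equations hold at
`t = 0`, then the derivative of `t ↦ j(u(t)) − a(t)(u(t), p(t)) + l(p(t))` at `0` is
`−a'(0)(u₀, p₀)`, independently of the derivatives of `u` and `p` (structural backbone of
Lemmas 4.5, 4.7 and 4.8 of the paper). -/
theorem lagrangian_shape_derivative_adjoint_cancellation
    {V : Type*} [NormedAddCommGroup V] [NormedSpace ℝ V]
    (a : ℝ → V →L[ℝ] V →L[ℝ] ℝ) (a₀ c : V →L[ℝ] V →L[ℝ] ℝ)
    (ha : HasDerivAt a c 0) (ha0 : a 0 = a₀)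
    (l : V →L[ℝ] ℝ) (j : V → ℝ)
    (u p : ℝ → V) (u₀ p₀ : V) (hu0 : u 0 = u₀) (hp0 : p 0 = p₀)
    (hu : DifferentiableAt ℝ u 0) (hp : DifferentiableAt ℝ p 0)
    (hj : DifferentiableAt ℝ j u₀)
    (hstate : ∀ v : V, a₀ u₀ v = l v)
    (hadjoint : ∀ v : V, a₀ v p₀ = fderiv ℝ j u₀ v) :
    HasDerivAt (fun t : ℝ => j (u t) - a t (u t) (p t) + l (p t)) (-(c u₀ p₀)) 0 := by
  have hu' := hu.hasDerivAt
  have hp' := hp.hasDerivAt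
  set u' := deriv u 0
  set p' := deriv p 0
  have h1 : HasDerivAt (fun t => a t (u t)) (c (u 0) + a 0 u') 0 := ha.clm_apply hu'
  have h2 : HasDerivAt (fun t => a t (u t) (p t))
      ((c (u 0) + a 0 u') (p 0) + a 0 (u 0) p') 0 := h1.clm_apply hp'
  have hjc : HasDerivAt (fun t => j (u t)) (fderiv ℝ j u₀ u') 0 := by
    have hj' : HasFDerivAt j (fderiv ℝ j u₀) (u 0) := hu0 ▸ hj.hasFDerivAt
    exact hj'.comp_hasDerivAt 0 hu'
  have hlc : HasDerivAt (fun t => l (p t)) (l p') 0 :=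
    l.hasFDerivAt.comp_hasDerivAt 0 hp'
  have h := (hjc.sub h2).add hlc
  have key : fderiv ℝ j u₀ u' - ((c (u 0) + a 0 u') (p 0) + a 0 (u 0) p') + l p'
      = -(c u₀ p₀) := by
    rw [hu0, hp0, ha0]
    simp [hadjoint u', hstate p']
    ring
  rwa [key] at h
end
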